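/- arXiv:1211.4990 — 5 statements merged into one kernel-verified Lean document; each statement's English description precedes it below -/
import Mathlib

section
/- Let A be a unital C*-algebra, let φ be a positive linear functional on A with φ(1) ≤ 1, let p ∈ A be a projection, and let a ∈ A with 0 ≤ a ≤ 1. Then (φ(p a² p))² ≤ φ((p a p)²). -/
open ComplexOrder

namespace PositiveLinearMap

variable {A : Type*} [CStarAlgebra A] [PartialOrder A] [StarOrderedRing A]

/-- Kadison's inequality for a positive functional of norm at most one. -/
theorem sq_apply_le_apply_sq (φ : A →ₚ[ℂ] ℂ) (hφ1 : φ 1 ≤ 1) {b : A} (hb : IsSelfAdjoint b) :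
    φ b ^ 2 ≤ φ (b ^ 2) := by
  set t := φ b
  have ht : star t = t := (hb.map' φ).star_eq
  have ht_sq : 0 ≤ t ^ 2 := by simpa only [ht, sq] using star_mul_self_nonneg t
  set c := b - t • (1 : A)
  -- `0 ≤ φ (c⋆ c)` with `c = b - φ b` expands to `φ b ^ 2 (2 - φ 1) ≤ φ (b ^ 2)`.
  have hexpand : φ (b ^ 2) - t ^ 2 = φ (star c * c) + t ^ 2 * (1 - φ 1) := by
    have hc : star c * c = b ^ 2 - t • b - t • b + (t * t) • (1 : A) := by
      simp only [c, star_sub, hb.star_eq, star_smul, ht, star_one, sub_mul, mul_sub,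
        smul_mul_assoc, mul_smul_comm, smul_smul, smul_sub, sq, mul_one, one_mul]
      abel
    rw [hc, map_add, map_sub, map_sub, map_smul, map_smul, smul_eq_mul, smul_eq_mul]
    ring
  rw [← sub_nonneg, hexpand]
  exact add_nonneg (φ.map_nonneg (star_mul_self_nonneg c)) (mul_nonneg ht_sq (sub_nonneg.2 hφ1))

end PositiveLinearMap

theorem stmt2_general {A : Type*} [CStarAlgebra A] [PartialOrder A] [StarOrderedRing A]
    (φ : A →ₗ[ℂ] ℂ) (hφ : ∀ b : A, 0 ≤ b → 0 ≤ φ b) (hφ1 : φ 1 ≤ 1)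
    (p : A) (hp_sa : p = star p)
    (a : A) (ha0 : 0 ≤ a) (ha1 : a ≤ 1) :
    φ (p * a ^ 2 * p) ^ 2 ≤ φ ((p * a * p) ^ 2) := by
  let ψ := PositiveLinearMap.mk₀ φ hφ
  have hp : IsSelfAdjoint p := hp_sa.symm
  have ha_sq : a ^ 2 ≤ a := by simpa using CStarAlgebra.pow_antitone ha0 ha1 one_le_two
  calc φ (p * a ^ 2 * p) ^ 2 ≤ φ (p * a * p) ^ 2 :=
        pow_le_pow_left₀ (ψ.map_nonneg (hp.conjugate_nonneg (CStarAlgebra.pow_nonneg ha0 2)))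
          (ψ.monotone' (hp.conjugate_le_conjugate ha_sq)) 2
    _ ≤ φ ((p * a * p) ^ 2) :=
        ψ.sq_apply_le_apply_sq hφ1 (.of_nonneg (hp.conjugate_nonneg ha0))

/-- For a positive linear functional `φ` with `φ(1) ≤ 1` on a unital C*-algebra, a
projection `p`, and `a` with `0 ≤ a ≤ 1`: `(φ(p a² p))² ≤ φ((p a p)²)`. -/
theorem stmt2 {A : Type*} [CStarAlgebra A] [PartialOrder A] [StarOrderedRing A]
    (φ : A →ₗ[ℂ] ℂ) (hφ : ∀ b : A, 0 ≤ b → 0 ≤ φ b) (hφ1 : φ 1 ≤ 1)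
    (p : A) (hp_sa : p = star p) (hp_idem : p * p = p)
    (a : A) (ha0 : 0 ≤ a) (ha1 : a ≤ 1) :
    φ (p * a ^ 2 * p) ^ 2 ≤ φ ((p * a * p) ^ 2) :=
  stmt2_general φ hφ hφ1 p hp_sa a ha0 ha1
end

section
/- Let A be a unital C*-algebra, let φ be a positive linear functional on A with φ(1) ≤ 1, let p ∈ A be a projection, and let a ∈ A with 0 ≤ a ≤ 1. Then for every x ∈ A with 0 ≤ x ≤ 1, |φ( ((1−p)(a x a)p + p(a x a)(1−p))/2 )| ≤ 2·(φ((p a p)²))^{1/4} + (φ((p a p)²))^{1/2}. -/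
open ComplexOrder

/-!
With `s = (1 - p) a x a p`, the left-hand side is `|Re φ(s)| ≤ ‖φ(s)‖`, and `s = y a p` with
`y = (1 - p) a x` a contraction. The Cauchy–Schwarz inequality for the positive sesquilinear form
`(u, v) ↦ φ(u⋆ v)` gives `‖φ(s)‖² ≤ φ(y y⋆) φ(p a² p) ≤ φ(p a p)`, using `a² ≤ a`, and a second
application, against `1`, gives `φ(p a p)² ≤ φ((p a p)²)`. Hence `‖φ(s)‖ ≤ φ((p a p)²)^(1/4)`.
-/

theorem CStarAlgebra.mul_self_le_self_of_nonneg_of_le_one {A : Type*} [CStarAlgebra A]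
    [PartialOrder A] [StarOrderedRing A] {a : A} (ha₀ : 0 ≤ a) (ha₁ : a ≤ 1) : a * a ≤ a := by
  obtain ⟨r, hr, rfl⟩ : ∃ r : A, 0 ≤ r ∧ r * r = a :=
    ⟨CFC.sqrt a, CFC.sqrt_nonneg a, CFC.sqrt_mul_sqrt_self a ha₀⟩
  simpa only [hr.star_eq, mul_one, mul_assoc] using star_left_conjugate_le_conjugate ha₁ r

namespace PositiveLinearMap

section Ordered

variable {E : Type*} [AddCommMonoid E] [PartialOrder E] [Module ℂ E] (f : E →ₚ[ℂ] ℂ)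

theorem re_apply_mono {b c : E} (h : b ≤ c) : (f b).re ≤ (f c).re :=
  Complex.re_le_re (OrderHomClass.mono f h)

theorem re_apply_nonneg {b : E} (hb : 0 ≤ b) : 0 ≤ (f b).re := by
  simpa using f.re_apply_mono hb

end Ordered

section NonUnital

variable {A : Type*} [NonUnitalCStarAlgebra A] [PartialOrder A] [StarOrderedRing A]
  (f : A →ₚ[ℂ] ℂ)

theorem norm_apply_star_mul_sq_le (x y : A) :
    ‖f (star x * y)‖ ^ 2 ≤ (f (star x * x)).re * (f (star y * y)).re := by
  have hnorm (z : A) : ‖f.toPreGNS z‖ ^ 2 = (f (star z * z)).re := by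
    simpa [← Complex.ofReal_pow] using congrArg Complex.re (f.preGNS_norm_sq (f.toPreGNS z))
  rw [← hnorm, ← hnorm, ← mul_pow]
  gcongr
  exact norm_inner_le_norm (𝕜 := ℂ) (f.toPreGNS x) (f.toPreGNS y)

theorem norm_apply_add_star_div_two_le (z : A) : ‖f (z + star z) / 2‖ ≤ ‖f z‖ := by
  rw [map_add, map_star, norm_div, RCLike.norm_ofNat]
  linarith [norm_add_le (f z) (star (f z)), norm_star (f z)]

end NonUnital

variable {A : Type*} [CStarAlgebra A] [PartialOrder A] [StarOrderedRing A]
  {f : A →ₚ[ℂ] ℂ}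

theorem re_apply_star_mul_self_le (hf : ‖f 1‖ ≤ 1) (y : A) : (f (star y * y)).re ≤ ‖y‖ ^ 2 :=
  calc (f (star y * y)).re
      ≤ ‖f 1‖ * ‖star y * y‖ := (Complex.re_le_norm _).trans
        (norm_apply_le_of_nonneg f _ (star_mul_self_nonneg y))
    _ ≤ ‖y‖ ^ 2 := by
      rw [CStarRing.norm_star_mul_self, ← sq]
      exact mul_le_of_le_one_left (by positivity) hf

theorem sq_re_apply_le (hf : ‖f 1‖ ≤ 1) {b : A} (hb : IsSelfAdjoint b) :
    (f b).re ^ 2 ≤ (f (b ^ 2)).re :=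
  calc (f b).re ^ 2
      ≤ ‖f (star 1 * b)‖ ^ 2 := by
        rw [star_one, one_mul, ← sq_abs]
        gcongr
        exact Complex.abs_re_le_norm _
    _ ≤ (f (star 1 * 1)).re * (f (star b * b)).re := norm_apply_star_mul_sq_le f 1 b
    _ ≤ (f (b ^ 2)).re := by
      rw [star_one, one_mul, hb.star_eq, ← sq]
      exact mul_le_of_le_one_left (f.re_apply_nonneg (hb.sq_nonneg))
        ((Complex.re_le_norm _).trans hf)

theorem norm_apply_mul_mul_sq_le (hf : ‖f 1‖ ≤ 1) {p a y : A} (hp : IsSelfAdjoint p)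
    (ha₀ : 0 ≤ a) (ha₁ : a ≤ 1) (hy : ‖y‖ ≤ 1) :
    ‖f (y * a * p)‖ ^ 2 ≤ (f (p * a * p)).re := by
  have hyap : y * a * p = star (star y) * (a * p) := by rw [star_star, mul_assoc]
  have hpaap : star (a * p) * (a * p) = p * (a * a) * p := by
    simp only [star_mul, ha₀.star_eq, hp.star_eq, mul_assoc]
  calc ‖f (y * a * p)‖ ^ 2
      ≤ (f (star (star y) * star y)).re * (f (star (a * p) * (a * p))).re := by
        rw [hyap]
        exact norm_apply_star_mul_sq_le f _ _
    _ ≤ (f (star (a * p) * (a * p))).re := by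
        refine mul_le_of_le_one_left (f.re_apply_nonneg (star_mul_self_nonneg _)) ?_
        refine (re_apply_star_mul_self_le hf _).trans ?_
        rw [norm_star]
        exact pow_le_one₀ (norm_nonneg y) hy
    _ ≤ (f (p * a * p)).re := by
        rw [hpaap]
        refine f.re_apply_mono (hp.conjugate_le_conjugate ?_)
        exact CStarAlgebra.mul_self_le_self_of_nonneg_of_le_one ha₀ ha₁

theorem norm_apply_mul_mul_pow_four_le (hf : ‖f 1‖ ≤ 1) {p a y : A} (hp : IsSelfAdjoint p)
    (ha₀ : 0 ≤ a) (ha₁ : a ≤ 1) (hy : ‖y‖ ≤ 1) :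
    ‖f (y * a * p)‖ ^ 4 ≤ (f ((p * a * p) ^ 2)).re :=
  calc ‖f (y * a * p)‖ ^ 4 = (‖f (y * a * p)‖ ^ 2) ^ 2 := by ring
    _ ≤ (f (p * a * p)).re ^ 2 := by
        gcongr
        exact norm_apply_mul_mul_sq_le hf hp ha₀ ha₁ hy
    _ ≤ (f ((p * a * p) ^ 2)).re := sq_re_apply_le hf (ha₀.isSelfAdjoint.conjugate_self hp)

end PositiveLinearMap

/-- For a positive linear functional `φ` with `φ(1) ≤ 1` on a unital C*-algebra, a
projection `p`, and `a` with `0 ≤ a ≤ 1`: for every `x` with `0 ≤ x ≤ 1`,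
`|φ(((1−p)(a x a)p + p(a x a)(1−p))/2)| ≤ 2·(φ((p a p)²))^{1/4} + (φ((p a p)²))^{1/2}`. -/
theorem stmt5 {A : Type*} [CStarAlgebra A] [PartialOrder A] [StarOrderedRing A]
    (φ : A →ₗ[ℂ] ℂ) (hφ : ∀ b : A, 0 ≤ b → 0 ≤ φ b) (hφ1 : φ 1 ≤ 1)
    (p : A) (hp_sa : p = star p) (hp_idem : p * p = p)
    (a : A) (ha0 : 0 ≤ a) (ha1 : a ≤ 1) :
    ∀ x : A, 0 ≤ x → x ≤ 1 →
      ‖φ ((1 - p) * (a * x * a) * p + p * (a * x * a) * (1 - p)) / 2‖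
        ≤ 2 * (φ ((p * a * p) ^ 2)).re ^ ((1 : ℝ) / 4)
          + (φ ((p * a * p) ^ 2)).re ^ ((1 : ℝ) / 2) := by
  intro x hx0 hx1
  set f := PositiveLinearMap.mk₀ φ hφ
  have hp : IsStarProjection p := ⟨hp_idem, hp_sa.symm⟩
  have hf : ‖f 1‖ ≤ 1 := by
    have h := CStarAlgebra.norm_le_norm_of_nonneg_of_le (hφ 1 zero_le_one) hφ1
    rwa [norm_one] at h
  set y := (1 - p) * a * x
  have hy : ‖y‖ ≤ 1 := by
    have ha : ‖a‖ ≤ 1 := (CStarAlgebra.norm_le_one_iff_of_nonneg a ha0).mpr ha1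
    have hx : ‖x‖ ≤ 1 := (CStarAlgebra.norm_le_one_iff_of_nonneg x hx0).mpr hx1
    calc ‖y‖ ≤ ‖1 - p‖ * ‖a‖ * ‖x‖ := norm_mul₃_le
      _ ≤ 1 := mul_le_one₀ (mul_le_one₀ hp.one_sub.norm_le (norm_nonneg _) ha) (norm_nonneg _) hx
  have hsplit : (1 - p) * (a * x * a) * p + p * (a * x * a) * (1 - p)
      = y * a * p + star (y * a * p) := by
    simp only [y, star_mul, hp.one_sub.isSelfAdjoint.star_eq, ha0.star_eq, hx0.star_eq,
      hp.isSelfAdjoint.star_eq, mul_assoc]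
  set T := (φ ((p * a * p) ^ 2)).re
  have hT : 0 ≤ T :=
    f.re_apply_nonneg (ha0.isSelfAdjoint.conjugate_self hp.isSelfAdjoint).sq_nonneg
  have hroot : ‖f (y * a * p)‖ ≤ T ^ ((1 : ℝ) / 4) := by
    rw [one_div, Real.le_rpow_inv_iff_of_pos (norm_nonneg _) hT (by norm_num)]
    exact_mod_cast f.norm_apply_mul_mul_pow_four_le hf hp.isSelfAdjoint ha0 ha1 hy
  calc _ ≤ ‖f (y * a * p)‖ := hsplit ▸ f.norm_apply_add_star_div_two_le _
    _ ≤ _ := by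
        have h₄ := Real.rpow_nonneg hT ((1 : ℝ) / 4)
        have h₂ := Real.rpow_nonneg hT ((1 : ℝ) / 2)
        linarith
end

section
/- Let c : ℕ → ℕ → ℝ be a doubly indexed family of nonnegative real numbers which is uniformly bounded (there is C with c k n ≤ C for all k, n), such that for each fixed k the sequence n ↦ c k n converges to 0, and such that the sequence n ↦ sup_k c k n converges to some θ > 0. Then there exist strictly increasing functions σ, τ : ℕ → ℕ such that the sequence m ↦ c (σ m) (τ m) converges to θ. -/
/-!
For `n` large, `sup_k c k n` lies close to `θ` while each of the finitely many rows `k < K` is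
already below a fixed level in `(0, θ)`, so the supremum is approached by some `c k n` with
`k ≥ K`. Hence `θ` is a cluster point of `c` along `atTop ×ˢ atTop`; a sequence of indices
realising it, thinned out so that both coordinates increase strictly, gives `σ` and `τ`.
-/

open Filter Set Topology

theorem Filter.Tendsto.exists_strictMono_subseq_prod {β γ : Type*} [LinearOrder β] [NoMaxOrder β]
    [LinearOrder γ] [NoMaxOrder γ] {ψ : ℕ → β × γ} (h : Tendsto ψ atTop (atTop ×ˢ atTop)) :
    ∃ φ : ℕ → ℕ, StrictMono φ ∧ StrictMono (fun m => (ψ (φ m)).1) ∧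
      StrictMono (fun m => (ψ (φ m)).2) := by
  obtain ⟨φ₁, hφ₁, h₁⟩ := strictMono_subseq_of_tendsto_atTop h.fst
  obtain ⟨φ₂, hφ₂, h₂⟩ := strictMono_subseq_of_tendsto_atTop (h.snd.comp hφ₁.tendsto_atTop)
  exact ⟨φ₁ ∘ φ₂, hφ₁.comp hφ₂, h₁.comp hφ₂, h₂⟩

theorem MapClusterPt.exists_strictMono_tendsto_uncurry {X : Type*} [TopologicalSpace X]
    [FirstCountableTopology X] {u : ℕ → ℕ → X} {x : X}
    (hx : MapClusterPt x (atTop ×ˢ atTop) (Function.uncurry u)) :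
    ∃ σ τ : ℕ → ℕ, StrictMono σ ∧ StrictMono τ ∧
      Tendsto (fun m => u (σ m) (τ m)) atTop (𝓝 x) := by
  obtain ⟨ψ, hux, hψ⟩ := hx.exists_seq_tendsto
  obtain ⟨φ, hφ, hσ, hτ⟩ := hψ.exists_strictMono_subseq_prod
  exact ⟨_, _, hσ, hτ, hux.comp hφ.tendsto_atTop⟩

section SupRows

variable {c : ℕ → ℕ → ℝ} {θ : ℝ}

theorem exists_mem_Ioo_of_tendsto_iSup (hbdd : ∀ n, BddAbove (range fun k => c k n))
    (hnull : ∀ k, Tendsto (fun n => c k n) atTop (𝓝 0))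
    (hsup : Tendsto (fun n => ⨆ k, c k n) atTop (𝓝 θ)) {a b : ℝ} (ha₀ : 0 < a) (ha : a < θ)
    (hb : θ < b) (K N : ℕ) : ∃ k ≥ K, ∃ n ≥ N, c k n ∈ Ioo a b := by
  have hrows : ∀ᶠ n in atTop, ∀ k ∈ {k | k < K}, c k n < a :=
    (eventually_all_finite (finite_lt_nat K)).2 fun k _ => (hnull k).eventually_lt_const ha₀
  obtain ⟨n, hnN, hlow, hsup_gt, hsup_lt⟩ :=
    ((eventually_ge_atTop N).and (hrows.and (hsup (Ioo_mem_nhds ha hb)))).exists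
  obtain ⟨k, hk⟩ := exists_lt_of_lt_ciSup hsup_gt
  refine ⟨k, ?_, n, hnN, hk, (le_ciSup (hbdd n) k).trans_lt hsup_lt⟩
  by_contra! hkK
  exact (hk.trans (hlow k hkK)).false

theorem mapClusterPt_uncurry_of_tendsto_iSup (hbdd : ∀ n, BddAbove (range fun k => c k n))
    (hnull : ∀ k, Tendsto (fun n => c k n) atTop (𝓝 0)) (hθ : 0 < θ)
    (hsup : Tendsto (fun n => ⨆ k, c k n) atTop (𝓝 θ)) :
    MapClusterPt θ (atTop ×ˢ atTop) (Function.uncurry c) := by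
  rw [mapClusterPt_iff_frequently, prod_atTop_atTop_eq]
  intro s hs
  obtain ⟨l, u, ⟨hl, hu⟩, hlu⟩ := mem_nhds_iff_exists_Ioo_subset.1 hs
  rw [frequently_atTop]
  rintro ⟨K, N⟩
  obtain ⟨k, hk, n, hn, hkn⟩ := exists_mem_Ioo_of_tendsto_iSup hbdd hnull hsup
    (lt_max_of_lt_right (half_pos hθ)) (max_lt hl (half_lt_self hθ)) hu K N
  exact ⟨(k, n), ⟨hk, hn⟩, hlu (Ioo_subset_Ioo_left (le_max_left _ _) hkn)⟩

end SupRows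

theorem stmt8_general (c : ℕ → ℕ → ℝ)
    (C : ℝ) (hbdd : ∀ k n, c k n ≤ C)
    (hnull : ∀ k, Tendsto (fun n => c k n) atTop (nhds 0))
    (θ : ℝ) (hθ : 0 < θ)
    (hsup : Tendsto (fun n => ⨆ k, c k n) atTop (nhds θ)) :
    ∃ σ τ : ℕ → ℕ, StrictMono σ ∧ StrictMono τ ∧
      Tendsto (fun m => c (σ m) (τ m)) atTop (nhds θ) :=
  (mapClusterPt_uncurry_of_tendsto_iSup (fun n => ⟨C, forall_mem_range.2 fun k => hbdd k n⟩)
    hnull hθ hsup).exists_strictMono_tendsto_uncurry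

/-- Lemma 2.4(b), abstract form: if `c k n ≥ 0` is uniformly bounded, each row `n ↦ c k n`
tends to `0`, and `n ↦ sup_k c k n` tends to `θ > 0`, then there are strictly increasing
`σ, τ : ℕ → ℕ` with `c (σ m) (τ m) → θ`. -/
theorem stmt8 (c : ℕ → ℕ → ℝ) (hnonneg : ∀ k n, 0 ≤ c k n)
    (C : ℝ) (hbdd : ∀ k n, c k n ≤ C)
    (hnull : ∀ k, Tendsto (fun n => c k n) atTop (nhds 0))
    (θ : ℝ) (hθ : 0 < θ)
    (hsup : Tendsto (fun n => ⨆ k, c k n) atTop (nhds θ)) :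
    ∃ σ τ : ℕ → ℕ, StrictMono σ ∧ StrictMono τ ∧
      Tendsto (fun m => c (σ m) (τ m)) atTop (nhds θ) :=
  stmt8_general c C hbdd hnull θ hθ hsup
end

section
/- Let A be a unital C*-algebra, let 0 < δ < 1, let q ∈ A be a projection, and let b ∈ A with 0 ≤ b ≤ 1 satisfy (1−q) b (1−q) ≤ δ·1. Then ‖b − q b q‖ ≤ 5·√δ. -/
/-- If `q` is a projection in a unital C*-algebra, `0 < δ < 1`, and `0 ≤ b ≤ 1` satisfies
`(1−q) b (1−q) ≤ δ·1`, then `‖b − q b q‖ ≤ 5·√δ`. -/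
theorem stmt9 {A : Type*} [CStarAlgebra A] [PartialOrder A] [StarOrderedRing A]
    (δ : ℝ) (hδ0 : 0 < δ) (hδ1 : δ < 1)
    (q : A) (hq_sa : q = star q) (hq_idem : q * q = q)
    (b : A) (hb0 : 0 ≤ b) (hb1 : b ≤ 1)
    (hbq : (1 - q) * b * (1 - q) ≤ (δ : ℂ) • (1 : A)) :
    ‖b - q * b * q‖ ≤ 5 * Real.sqrt δ := by
  have hδ0' : (0:ℝ) ≤ δ := hδ0.le
  have hsq : Real.sqrt δ * Real.sqrt δ = δ := Real.mul_self_sqrt hδ0'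
  set p : A := 1 - q with hp
  have hp_sa : star p = p := by rw [hp]; simp [← hq_sa]
  have hp_idem : p * p = p := by
    have : p * p = 1 - q - q + q * q := by rw [hp]; noncomm_ring
    rw [this, hq_idem]; rw [hp]; abel
  have hb_sa : star b = b := (IsSelfAdjoint.of_nonneg hb0).star_eq
  have halg : (δ : ℂ) • (1 : A) = algebraMap ℝ A δ := by
    rw [Algebra.algebraMap_eq_smul_one, ← IsScalarTower.algebraMap_smul ℂ δ (1:A)]
    norm_num
  rw [halg] at hbq
  have hpbp0 : 0 ≤ p * b * p := by
    have := star_left_conjugate_le_conjugate hb0 p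
    simpa [hp_sa, mul_assoc] using this
  -- ‖p b p‖ ≤ δ
  have h1 : ‖p * b * p‖ ≤ δ :=
    (CStarAlgebra.norm_le_iff_le_algebraMap _ hδ0' hpbp0).mpr hbq
  -- q ≤ 1
  have hq1 : q ≤ 1 := by
    have hppos : 0 ≤ p := by
      calc (0:A) ≤ star p * p := star_mul_self_nonneg p
        _ = p := by rw [hp_sa, hp_idem]
    rw [hp] at hppos; exact sub_nonneg.mp hppos
  have hb2 : b * b ≤ b := by
    have := CStarAlgebra.pow_antitone hb0 hb1 (show 1 ≤ 2 by norm_num)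
    simpa [pow_two] using this
  have key : p * (b * q * b) * p ≤ algebraMap ℝ A δ := by
    have h2 : b * q * b ≤ b * b := by
      have := star_left_conjugate_le_conjugate hq1 b
      simpa [hb_sa, mul_assoc] using this
    calc p * (b * q * b) * p ≤ p * (b * b) * p := by
          have := star_left_conjugate_le_conjugate h2 p
          simpa [hp_sa, mul_assoc] using this
      _ ≤ p * b * p := by
          have := star_left_conjugate_le_conjugate hb2 p
          simpa [hp_sa, mul_assoc] using this
      _ ≤ algebraMap ℝ A δ := hbq
  have hx_sa : star (p * b * q) = q * b * p := by
    simp [mul_assoc, hp_sa, hb_sa, ← hq_sa]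
  have hxx : (p * b * q) * star (p * b * q) = p * (b * q * b) * p := by
    rw [hx_sa]
    calc p * b * q * (q * b * p) = p * (b * (q * q) * b) * p := by noncomm_ring
      _ = p * (b * q * b) * p := by rw [hq_idem]
  have hxx0 : 0 ≤ p * (b * q * b) * p := hxx ▸ mul_star_self_nonneg (p * b * q)
  have h2 : ‖p * b * q‖ ≤ Real.sqrt δ := by
    have hn : ‖(p * b * q) * star (p * b * q)‖ ≤ δ := by
      rw [hxx]; exact (CStarAlgebra.norm_le_iff_le_algebraMap _ hδ0' hxx0).mpr key
    rw [CStarRing.norm_self_mul_star] at hn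
    nlinarith [norm_nonneg (p * b * q), Real.sqrt_nonneg δ]
  have h3 : ‖q * b * p‖ ≤ Real.sqrt δ := by
    rw [← hx_sa, norm_star]; exact h2
  have hdecomp : b - q * b * q = q * b * p + p * b * q + p * b * p := by
    rw [hp]; noncomm_ring
  have hsle1 : Real.sqrt δ ≤ 1 := Real.sqrt_le_one.mpr hδ1.le
  calc ‖b - q * b * q‖ ≤ ‖q * b * p‖ + ‖p * b * q‖ + ‖p * b * p‖ := by
        rw [hdecomp]; exact norm_add₃_le
    _ ≤ Real.sqrt δ + Real.sqrt δ + δ := by linarith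
    _ ≤ 5 * Real.sqrt δ := by nlinarith [Real.sqrt_nonneg δ]
end

section
/- Let A be a unital C*-algebra, let 0 < δ < 1, let q ∈ A be a projection, and let a ∈ A with 0 ≤ a ≤ 1 satisfy (1−q) a (1−q) ≤ δ·1. Then for every x ∈ A with ‖x‖ ≤ 1, ‖a x a − (q a q) x (q a q)‖ ≤ 20·√δ. -/
lemma norm_mul_mul_sub_mul_mul_le {R : Type*} [NonUnitalSeminormedRing R] (a b x : R) :
    ‖a * x * a - b * x * b‖ ≤ ‖a - b‖ * ‖x‖ * (‖a‖ + ‖b‖) :=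
  calc ‖a * x * a - b * x * b‖ = ‖(a - b) * x * a + b * x * (a - b)‖ := by noncomm_ring
    _ ≤ ‖a - b‖ * ‖x‖ * ‖a‖ + ‖b‖ * ‖x‖ * ‖a - b‖ := norm_add_le_of_le norm_mul₃_le norm_mul₃_le
    _ = ‖a - b‖ * ‖x‖ * (‖a‖ + ‖b‖) := by ring

namespace IsStarProjection

variable {E : Type*} [NormedRing E] [StarRing E] [CStarRing E] {p : E}

lemma norm_mul_mul_le (hp : IsStarProjection p) (a : E) : ‖p * a * p‖ ≤ ‖a‖ :=
  calc ‖p * a * p‖ ≤ ‖p‖ * ‖a‖ * ‖p‖ := norm_mul₃_le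
    _ ≤ 1 * ‖a‖ * 1 := by gcongr <;> exact hp.norm_le
    _ = ‖a‖ := by ring

lemma norm_sub_mul_mul_le (hp : IsStarProjection p) (a : E) :
    ‖a - p * a * p‖ ≤ ‖a * (1 - p)‖ + ‖(1 - p) * a‖ :=
  calc ‖a - p * a * p‖ = ‖a * (1 - p) + (1 - p) * a * p‖ := by noncomm_ring
    _ ≤ ‖a * (1 - p)‖ + ‖(1 - p) * a‖ * ‖p‖ := norm_add_le_of_le le_rfl (norm_mul_le _ _)
    _ ≤ ‖a * (1 - p)‖ + ‖(1 - p) * a‖ * 1 := by gcongr; exact hp.norm_le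
    _ = ‖a * (1 - p)‖ + ‖(1 - p) * a‖ := by ring

end IsStarProjection

namespace CStarAlgebra

variable {A : Type*} [CStarAlgebra A] [PartialOrder A] [StarOrderedRing A]

/-- Since `a² ≤ a` for `0 ≤ a ≤ 1`, the C⋆-identity gives `‖a b‖² = ‖b⋆ a² b‖ ≤ ‖b⋆ a b‖`. -/
lemma norm_mul_le_sqrt_of_star_mul_mul_le {a b : A} (ha₀ : 0 ≤ a) (ha₁ : a ≤ 1) {r : ℝ}
    (hr : 0 ≤ r) (h : star b * a * b ≤ algebraMap ℝ A r) : ‖a * b‖ ≤ √r := by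
  have ha : IsSelfAdjoint a := .of_nonneg ha₀
  have hsq : a * a ≤ a := by simpa [sq] using pow_antitone ha₀ ha₁ one_le_two
  have hnonneg : 0 ≤ star b * (a * a) * b := by
    simpa [ha.star_eq] using star_left_conjugate_nonneg (star_mul_self_nonneg a) b
  have hnorm : ‖star b * (a * a) * b‖ ≤ r :=
    (norm_le_iff_le_algebraMap _ hr hnonneg).mpr
      ((star_left_conjugate_le_conjugate hsq b).trans h)
  rw [Real.le_sqrt (norm_nonneg _) hr, sq, ← CStarRing.norm_star_mul_self]
  simpa [star_mul, ha.star_eq, mul_assoc] using hnorm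

end CStarAlgebra

theorem stmt10_general {A : Type*} [CStarAlgebra A] [PartialOrder A] [StarOrderedRing A]
    (δ : ℝ) (hδ0 : 0 < δ)
    (q : A) (hq_sa : q = star q) (hq_idem : q * q = q)
    (a : A) (ha0 : 0 ≤ a) (ha1 : a ≤ 1)
    (haq : (1 - q) * a * (1 - q) ≤ (δ : ℂ) • (1 : A)) :
    ∀ x : A, ‖x‖ ≤ 1 →
      ‖a * x * a - (q * a * q) * x * (q * a * q)‖ ≤ 20 * Real.sqrt δ := by
  intro x hx
  have hq : IsStarProjection q := ⟨hq_idem, hq_sa.symm⟩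
  have hp : IsSelfAdjoint (1 - q) := hq.one_sub.isSelfAdjoint
  have hδ : star (1 - q) * a * (1 - q) ≤ algebraMap ℝ A δ := by
    rwa [hp.star_eq, Algebra.algebraMap_eq_smul_one, ← Complex.coe_smul]
  have hap : ‖a * (1 - q)‖ ≤ √δ :=
    CStarAlgebra.norm_mul_le_sqrt_of_star_mul_mul_le ha0 ha1 hδ0.le hδ
  have hpa : ‖(1 - q) * a‖ ≤ √δ := by
    rwa [← norm_star, star_mul, hp.star_eq, (IsSelfAdjoint.of_nonneg ha0).star_eq]
  have ha : ‖a‖ ≤ 1 := (CStarAlgebra.norm_le_one_iff_of_nonneg a ha0).mpr ha1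
  calc ‖a * x * a - (q * a * q) * x * (q * a * q)‖
      ≤ ‖a - q * a * q‖ * ‖x‖ * (‖a‖ + ‖q * a * q‖) := norm_mul_mul_sub_mul_mul_le _ _ _
    _ ≤ (√δ + √δ) * 1 * (1 + 1) := by
        gcongr
        · exact (hq.norm_sub_mul_mul_le a).trans (add_le_add hap hpa)
        · exact (hq.norm_mul_mul_le a).trans ha
    _ ≤ 20 * √δ := by nlinarith [Real.sqrt_nonneg δ]

/-- If `q` is a projection in a unital C*-algebra, `0 < δ < 1`, and `0 ≤ a ≤ 1` satisfies
`(1−q) a (1−q) ≤ δ·1`, then `‖a x a − (q a q) x (q a q)‖ ≤ 20·√δ` for every `x` with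
`‖x‖ ≤ 1`. -/
theorem stmt10 {A : Type*} [CStarAlgebra A] [PartialOrder A] [StarOrderedRing A]
    (δ : ℝ) (hδ0 : 0 < δ) (hδ1 : δ < 1)
    (q : A) (hq_sa : q = star q) (hq_idem : q * q = q)
    (a : A) (ha0 : 0 ≤ a) (ha1 : a ≤ 1)
    (haq : (1 - q) * a * (1 - q) ≤ (δ : ℂ) • (1 : A)) :
    ∀ x : A, ‖x‖ ≤ 1 →
      ‖a * x * a - (q * a * q) * x * (q * a * q)‖ ≤ 20 * Real.sqrt δ :=
  stmt10_general δ hδ0 q hq_sa hq_idem a ha0 ha1 haq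
end
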